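/- Let X, X̄ ∈ ℝ^{q×K} be matrices, R ∈ ℝ^{K×K} orthogonal, and suppose every row of X has Euclidean norm at least c₀ q^{−1/2} for some constant c₀ > 0, and that ‖X̄ − XR‖_F ≤ (c₀/2) q^{−1/2}. Let X* and X̄* denote the row-normalized versions (each row divided by its Euclidean norm). Then ‖X̄* − X*R‖_F ≤ (2/c₀) q^{1/2} ‖X̄ − XR‖_F. -/

import Mathlib

open Matrix

/-- Euclidean norm of a (row) vector in `ℝ^K`. -/
noncomputable def rowNorm {K : ℕ} (v : Fin K → ℝ) : ℝ := Real.sqrt (∑ j, v j ^ 2)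

/-- Frobenius norm of a matrix. -/
noncomputable def frobNorm {m n : ℕ} (M : Matrix (Fin m) (Fin n) ℝ) : ℝ :=
  Real.sqrt (∑ i, ∑ j, M i j ^ 2)

/-- Row-normalization of a matrix: each row is divided by its Euclidean norm. -/
noncomputable def rowNormalize {m n : ℕ} (M : Matrix (Fin m) (Fin n) ℝ) :
    Matrix (Fin m) (Fin n) ℝ := fun i j => M i j / rowNorm (M i)

/-! For nonzero `y` and every `x`, `‖x/‖x‖ - y/‖y‖‖ ≤ 2 ‖x - y‖ / ‖y‖`,
because `‖y‖ (x/‖x‖ - y/‖y‖) = (‖y‖ - ‖x‖) x/‖x‖ + (x - y)` and `|‖y‖ - ‖x‖| ≤ ‖x - y‖`.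
Applied row by row, with `‖[XR]ᵢ‖ = ‖Xᵢ‖ ≥ c₀ q^{-1/2}` for orthogonal `R`, this bounds every
row of `X̄* - (XR)*` by `(2/c₀) q^{1/2}` times the corresponding row of `X̄ - XR`, and
`X* R = (XR)*`. Summing the squares gives the Frobenius bound. -/

namespace NormedSpace

variable {V : Type*} [NormedAddCommGroup V] [NormedSpace ℝ V]

theorem norm_normalize_le_one (x : V) : ‖normalize x‖ ≤ 1 := by
  by_cases hx : x = 0 <;> simp [hx, norm_normalize]

theorem norm_normalize_sub_normalize_le (x : V) {y : V} (hy : y ≠ 0) :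
    ‖normalize x - normalize y‖ ≤ 2 * ‖x - y‖ / ‖y‖ := by
  have hy' : 0 < ‖y‖ := norm_pos_iff.mpr hy
  have key : ‖y‖ • (normalize x - normalize y) = (‖y‖ - ‖x‖) • normalize x + (x - y) := by
    rw [smul_sub, sub_smul, norm_smul_normalize, norm_smul_normalize]
    abel
  rw [le_div_iff₀ hy']
  calc ‖normalize x - normalize y‖ * ‖y‖ = ‖(‖y‖ - ‖x‖) • normalize x + (x - y)‖ := by
        rw [← key, norm_smul, norm_norm, mul_comm]
    _ ≤ |‖y‖ - ‖x‖| * ‖normalize x‖ + ‖x - y‖ := by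
        grw [norm_add_le, norm_smul, Real.norm_eq_abs]
    _ ≤ ‖x - y‖ * 1 + ‖x - y‖ := by
        gcongr
        · rw [abs_sub_comm]; exact abs_norm_sub_norm_le x y
        · exact norm_normalize_le_one x
    _ = 2 * ‖x - y‖ := by ring

end NormedSpace

section Rows

variable {m n : ℕ}

theorem rowNorm_eq_norm_toLp (v : Fin n → ℝ) : rowNorm v = ‖WithLp.toLp 2 v‖ := by
  simp [rowNorm, EuclideanSpace.norm_eq, sq_abs]

theorem rowNorm_eq_sqrt_dotProduct (v : Fin n → ℝ) : rowNorm v = Real.sqrt (v ⬝ᵥ v) := by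
  simp [rowNorm, dotProduct, sq]

theorem rowNorm_vecMul_of_mul_transpose_eq_one (v : Fin m → ℝ) {R : Matrix (Fin m) (Fin n) ℝ}
    (hR : R * Rᵀ = 1) : rowNorm (v ᵥ* R) = rowNorm v := by
  rw [rowNorm_eq_sqrt_dotProduct, rowNorm_eq_sqrt_dotProduct, ← dotProduct_mulVec,
    ← mulVec_transpose, mulVec_mulVec, hR, one_mulVec]

theorem rowNormalize_mul_of_mul_transpose_eq_one {q : ℕ} (X : Matrix (Fin q) (Fin m) ℝ)
    {R : Matrix (Fin m) (Fin n) ℝ} (hR : R * Rᵀ = 1) :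
    rowNormalize X * R = rowNormalize (X * R) := by
  ext i j
  have hrow : (X * R) i = X i ᵥ* R := rfl
  simp only [rowNormalize, hrow, rowNorm_vecMul_of_mul_transpose_eq_one _ hR, mul_apply,
    Finset.sum_div, div_mul_eq_mul_div]

theorem toLp_rowNormalize (M : Matrix (Fin m) (Fin n) ℝ) (i : Fin m) :
    WithLp.toLp 2 (rowNormalize M i) = NormedSpace.normalize (WithLp.toLp 2 (M i)) := by
  ext j
  simp [rowNormalize, NormedSpace.normalize, ← rowNorm_eq_norm_toLp, div_eq_inv_mul]

theorem rowNorm_rowNormalize_sub_le (M N : Matrix (Fin m) (Fin n) ℝ) {i : Fin m}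
    (hN : 0 < rowNorm (N i)) :
    rowNorm ((rowNormalize M - rowNormalize N) i) ≤ 2 * rowNorm ((M - N) i) / rowNorm (N i) := by
  have row_sub (A B : Matrix (Fin m) (Fin n) ℝ) : (A - B) i = A i - B i := rfl
  rw [rowNorm_eq_norm_toLp] at hN
  rw [rowNorm_eq_norm_toLp, rowNorm_eq_norm_toLp, rowNorm_eq_norm_toLp, row_sub, row_sub,
    WithLp.toLp_sub, WithLp.toLp_sub, toLp_rowNormalize, toLp_rowNormalize]
  exact NormedSpace.norm_normalize_sub_normalize_le _ (norm_pos_iff.mp hN)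

theorem frobNorm_eq_sqrt_sum_rowNorm_sq (M : Matrix (Fin m) (Fin n) ℝ) :
    frobNorm M = Real.sqrt (∑ i, rowNorm (M i) ^ 2) := by
  simp only [frobNorm, rowNorm, Real.sq_sqrt (Finset.sum_nonneg fun _ _ => sq_nonneg _)]

theorem frobNorm_le_of_rowNorm_le {M N : Matrix (Fin m) (Fin n) ℝ} {C : ℝ} (hC : 0 ≤ C)
    (h : ∀ i, rowNorm (M i) ≤ C * rowNorm (N i)) : frobNorm M ≤ C * frobNorm N := by
  rw [frobNorm_eq_sqrt_sum_rowNorm_sq, frobNorm_eq_sqrt_sum_rowNorm_sq, ← Real.sqrt_sq hC,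
    ← Real.sqrt_mul (sq_nonneg C), Finset.mul_sum]
  gcongr with i
  rw [← mul_pow]
  exact pow_le_pow_left₀ (Real.sqrt_nonneg _) (h i) 2

end Rows

theorem rowNormalized_perturbation_general {q K : ℕ}
    (X Xbar : Matrix (Fin q) (Fin K) ℝ) (R : Matrix (Fin K) (Fin K) ℝ)
    (c₀ : ℝ) (hc₀ : 0 < c₀) (hR : Rᵀ * R = 1)
    (hrow : ∀ i, c₀ / Real.sqrt q ≤ rowNorm (X i)) :
    frobNorm (rowNormalize Xbar - rowNormalize X * R)
      ≤ (2 / c₀) * Real.sqrt q * frobNorm (Xbar - X * R) := by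
  have hR' : R * Rᵀ = 1 := mul_eq_one_comm.mp hR
  rw [rowNormalize_mul_of_mul_transpose_eq_one X hR']
  refine frobNorm_le_of_rowNorm_le (by positivity) fun i => ?_
  have hq : 0 < Real.sqrt q := Real.sqrt_pos.mpr (by exact_mod_cast i.pos)
  have hXR : c₀ / Real.sqrt q ≤ rowNorm ((X * R) i) :=
    (rowNorm_vecMul_of_mul_transpose_eq_one (X i) hR').symm ▸ hrow i
  calc rowNorm ((rowNormalize Xbar - rowNormalize (X * R)) i)
      ≤ 2 * rowNorm ((Xbar - X * R) i) / rowNorm ((X * R) i) :=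
        rowNorm_rowNormalize_sub_le Xbar (X * R) (hXR.trans_lt' (by positivity))
    _ ≤ 2 * rowNorm ((Xbar - X * R) i) / (c₀ / Real.sqrt q) := by
        gcongr
        exact mul_nonneg zero_le_two (Real.sqrt_nonneg _)
    _ = 2 / c₀ * Real.sqrt q * rowNorm ((Xbar - X * R) i) := by
        field_simp

/-- If every row of `X` has norm at least `c₀ q^{-1/2}`, `R` is orthogonal, and
`‖X̄ − XR‖_F ≤ (c₀/2) q^{-1/2}`, then
`‖X̄* − X*R‖_F ≤ (2/c₀) q^{1/2} ‖X̄ − XR‖_F`, where `*` denotes row normalization. -/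
theorem rowNormalized_perturbation {q K : ℕ}
    (X Xbar : Matrix (Fin q) (Fin K) ℝ) (R : Matrix (Fin K) (Fin K) ℝ)
    (c₀ : ℝ) (hc₀ : 0 < c₀) (hR : Rᵀ * R = 1)
    (hrow : ∀ i, c₀ / Real.sqrt q ≤ rowNorm (X i))
    (hpert : frobNorm (Xbar - X * R) ≤ (c₀ / 2) / Real.sqrt q) :
    frobNorm (rowNormalize Xbar - rowNormalize X * R)
      ≤ (2 / c₀) * Real.sqrt q * frobNorm (Xbar - X * R) :=
  rowNormalized_perturbation_general X Xbar R c₀ hc₀ hR hrow
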